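/- Let D be a weighted oriented graph such that every vertex of V^+ is a sink, let I = I(D), and let T be the principal ideal generated by x_i^{w(x_i)} x_j^{w(x_j)} x_r^{w(x_r)} for a triangle {x_i, x_j, x_r} of the underlying graph G. Then (I^2 : T) = I(D∖N[supp T]) + (x^{w(x)} : x ∈ N[supp T]), where supp T = {x_i, x_j, x_r}. -/

import Mathlib

open scoped BigOperators
open MvPolynomial

noncomputable section

/-- A weighted oriented graph on the vertex set `Fin n`: a loopless directed graph
together with a weight function taking values `≥ 1`. -/
structure WOGraph (n : ℕ) where
  adj : Fin n → Fin n → Prop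
  loopless : ∀ i, ¬ adj i i
  w : Fin n → ℕ
  one_le_w : ∀ i, 1 ≤ w i

namespace WOGraph

variable {n : ℕ} (D : WOGraph n)

/-- The underlying simple graph `G` of `D`. -/
def underlying : SimpleGraph (Fin n) where
  Adj i j := D.adj i j ∨ D.adj j i
  symm := ⟨fun _ _ h => h.symm⟩
  loopless := ⟨fun i h => h.elim (D.loopless i) (D.loopless i)⟩

/-- A sink: no edge leaves it. -/
def IsSink (i : Fin n) : Prop := ∀ j, ¬ D.adj i j

/-- A source: no edge enters it. -/
def IsSource (i : Fin n) : Prop := ∀ j, ¬ D.adj j i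

/-- `V⁺`: the set of vertices of non-trivial weight. -/
def Vplus : Set (Fin n) := {i | 2 ≤ D.w i}

/-- Closed neighborhood `N[S]` of a set of vertices in the underlying graph. -/
def nbhd (S : Set (Fin n)) : Set (Fin n) := S ∪ {j | ∃ i ∈ S, D.underlying.Adj i j}

/-- `{i, j, r}` induces a triangle in the underlying graph. -/
def IsTriangle (i j r : Fin n) : Prop :=
  D.underlying.Adj i j ∧ D.underlying.Adj j r ∧ D.underlying.Adj i r

/-- The maximal weight `w = max{w(x) : x ∈ V(D)}`. -/
def maxW : ℕ := Finset.univ.sup D.w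

/-- Gap-free: no two disjoint edges of the underlying graph form an induced matching. -/
def GapFree : Prop := ∀ a b c d : Fin n,
  D.underlying.Adj a b → D.underlying.Adj c d → a ≠ c → a ≠ d → b ≠ c → b ≠ d →
    (D.underlying.Adj a c ∨ D.underlying.Adj a d ∨ D.underlying.Adj b c ∨ D.underlying.Adj b d)

end WOGraph

/-- The polynomial ring `R = K[x_1, …, x_n]`. -/
abbrev MvPoly (n : ℕ) (K : Type*) [Field K] := MvPolynomial (Fin n) K

variable {n : ℕ} (K : Type*) [Field K]

/-- The edge ideal of the induced weighted oriented subgraph of `D` on a vertex subset `U`,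
regarded as an ideal of `K[x_1, …, x_n]`. -/
def edgeIdealOn (D : WOGraph n) (U : Set (Fin n)) : Ideal (MvPoly n K) :=
  Ideal.span {m | ∃ i j, i ∈ U ∧ j ∈ U ∧ D.adj i j ∧ m = X i * X j ^ D.w j}

/-- The edge ideal `I(D) = (x_i x_j^{w(x_j)} : (x_i, x_j) ∈ E(D))`. -/
def edgeIdeal (D : WOGraph n) : Ideal (MvPoly n K) := edgeIdealOn K D Set.univ

/-- The `k`-th symbolic power `I^{(k)} = ⋂_{P ∈ Min(R/I)} (I^k R_P ∩ R)`. -/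
def symbolicPower {R : Type*} [CommRing R] (I : Ideal R) (k : ℕ) : Ideal R :=
  ⨅ (P : Ideal R), ⨅ (hP : P ∈ I.minimalPrimes),
    haveI : P.IsPrime := hP.1.1
    Ideal.comap (algebraMap R (Localization.AtPrime P))
      (Ideal.map (algebraMap R (Localization.AtPrime P)) (I ^ k))

/-! ### Simplicial homology machinery, used to define multigraded Betti numbers of monomial
ideals via upper Koszul simplicial complexes, and thence Castelnuovo–Mumford regularity. -/

/-- The faces of dimension `c` (i.e. of cardinality `c + 1`) of a simplicial complex on `Fin n`. -/
abbrev Face (Δ : Set (Finset (Fin n))) (c : ℤ) : Type _ :=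
  {S : Finset (Fin n) // S ∈ Δ ∧ (S.card : ℤ) = c + 1}

/-- The space of simplicial `c`-chains with coefficients in `K`. -/
abbrev SChain (Δ : Set (Finset (Fin n))) (c : ℤ) : Type _ := Face Δ c → K

open Classical in
/-- Incidence number between faces: `±1` if `T ⊂ S` with `|S \ T| = 1`, else `0`. -/
def inc (S T : Finset (Fin n)) : K :=
  if T ⊆ S ∧ (S \ T).card = 1
  then (-1 : K) ^ (S.filter fun j => ∃ i ∈ S \ T, j < i).card
  else 0

/-- The simplicial boundary map from `c`-chains to `d`-chains (nonzero only when `d = c - 1`). -/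
def bdry (Δ : Set (Finset (Fin n))) (c d : ℤ) : SChain K Δ c →ₗ[K] SChain K Δ d where
  toFun f T := ∑ᶠ S : Face Δ c, inc K S.1 T.1 * f S
  map_add' f g := by
    funext T
    simp only [Pi.add_apply, mul_add]
    exact finsum_add_distrib (Set.toFinite _) (Set.toFinite _)
  map_smul' r f := by
    funext T
    simp only [Pi.smul_apply, smul_eq_mul, RingHom.id_apply]
    rw [mul_finsum _ _]
    exact finsum_congr fun S => by ring

/-- The reduced simplicial homology `H̃_c(Δ; K)` in dimension `c`. -/
abbrev redHomology (Δ : Set (Finset (Fin n))) (c : ℤ) : Type _ :=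
  LinearMap.ker (bdry K Δ c (c - 1)) ⧸
    Submodule.comap (LinearMap.ker (bdry K Δ c (c - 1))).subtype
      (LinearMap.range (bdry K Δ (c + 1) c))

/-- The upper Koszul simplicial complex `K^a(I)` of a monomial ideal `I` in degree `a`. -/
def upperKoszul (I : Ideal (MvPoly n K)) (a : Fin n →₀ ℕ) : Set (Finset (Fin n)) :=
  {S | (∀ i ∈ S, 1 ≤ a i) ∧
    (monomial (a - ∑ i ∈ S, Finsupp.single i 1) (1 : K)) ∈ I}

/-- The multigraded Betti number `β_{i,a}(I) = dim_K H̃_{i-1}(K^a(I); K)` of a monomial ideal. -/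
def bettiMulti (I : Ideal (MvPoly n K)) (i : ℕ) (a : Fin n →₀ ℕ) : ℕ :=
  Module.finrank K (redHomology K (upperKoszul K I a) ((i : ℤ) - 1))

/-- The graded Betti number `β_{i,j}(I) = ∑_{|a| = j} β_{i,a}(I)` of a monomial ideal. -/
def betti (I : Ideal (MvPoly n K)) (i j : ℕ) : ℕ :=
  ∑ᶠ (a : Fin n →₀ ℕ) (_ : (∑ v, a v) = j), bettiMulti K I i a

/-- Castelnuovo–Mumford regularity `reg(I) = max{j - i : β_{i,j}(I) ≠ 0}` of a monomial ideal. -/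
def reg (I : Ideal (MvPoly n K)) : ℕ :=
  sSup {d : ℕ | ∃ i j : ℕ, betti K I i j ≠ 0 ∧ j = d + i}

/-- `f` is a monomial (with coefficient 1). -/
def IsMonomial (f : MvPoly n K) : Prop := ∃ e : Fin n →₀ ℕ, f = monomial e 1

/-- `f` is a minimal monomial generator of the monomial ideal `J`. -/
def IsMinGen (J : Ideal (MvPoly n K)) (f : MvPoly n K) : Prop :=
  IsMonomial K f ∧ f ∈ J ∧ ∀ g : MvPoly n K, IsMonomial K g → g ∈ J → g ∣ f → g = f

end

/-! Under the sink hypothesis every tail has weight 1, so the generator of the edge `(a, b)` is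
`x_a^{w a} x_b^{w b}` and orientation plays no role. Writing `τ` for the exponent of the triangle
monomial, a monomial `x^e` lies in `(I^2 : T)` iff `e + τ` dominates the exponents of two edges.
If one of them avoids `N[S]` it is already dominated by `e`; if one has an endpoint `v` in
`N[S] ∖ S`, then `τ` vanishes at `v` and `x_v^{w v}` divides `x^e`; otherwise both edges lie in
the triangle and share a vertex `v`, at which `2 w v ≤ e v + w v`. Conversely, for `y ∈ N[S]`,
`x_y^{w y} T` is divisible by the product of the edge joining `y` to some `s ∈ S` and the edge of
the triangle opposite `s`. -/

open Finsupp

namespace MvPolynomial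

variable {σ R : Type*} [CommSemiring R]

open scoped Pointwise in
theorem span_monomial_image_mul (A B : Set (σ →₀ ℕ)) :
    Ideal.span ((fun s => monomial s (1 : R)) '' A) *
        Ideal.span ((fun s => monomial s (1 : R)) '' B) =
      Ideal.span ((fun s => monomial s (1 : R)) '' (A + B)) := by
  rw [Ideal.span_mul_span']
  congr 1
  ext m
  simp only [Set.mem_mul, Set.mem_add, Set.mem_image]
  constructor
  · rintro ⟨_, ⟨a, ha, rfl⟩, _, ⟨b, hb, rfl⟩, rfl⟩
    exact ⟨a + b, ⟨a, ha, b, hb, rfl⟩, by rw [monomial_mul, one_mul]⟩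
  · rintro ⟨_, ⟨a, ha, b, hb, rfl⟩, rfl⟩
    exact ⟨_, ⟨a, ha, rfl⟩, _, ⟨b, hb, rfl⟩, by rw [monomial_mul, one_mul]⟩

theorem mem_colon_span_monomial_iff {A : Set (σ →₀ ℕ)} {t : σ →₀ ℕ} {f : MvPolynomial σ R} :
    f ∈ (Ideal.span ((fun s => monomial s (1 : R)) '' A)).colon (Ideal.span {monomial t (1 : R)}) ↔
      ∀ e ∈ f.support, ∃ a ∈ A, a ≤ e + t := by
  classical
  rw [Ideal.mem_colon_span_singleton, mem_ideal_span_monomial_image]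
  constructor
  · intro h e he
    apply h
    rwa [mem_support_iff, coeff_mul_monomial, mul_one, ← mem_support_iff]
  · intro h d hd
    rw [mem_support_iff, coeff_mul_monomial'] at hd
    split_ifs at hd with htd
    · obtain ⟨a, ha, hle⟩ := h _ (mem_support_iff.mpr (by simpa using hd))
      exact ⟨a, ha, tsub_add_cancel_of_le htd ▸ hle⟩
    · exact absurd rfl hd

end MvPolynomial

section WeightExp

variable {V : Type*}

noncomputable def weightExp (w : V → ℕ) (U : Finset V) : V →₀ ℕ := ∑ v ∈ U, single v (w v)

variable {w : V → ℕ}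

theorem weightExp_apply [DecidableEq V] (U : Finset V) (v : V) :
    weightExp w U v = if v ∈ U then w v else 0 := by
  simp [weightExp, Finsupp.finsetSum_apply, single_apply]

theorem weightExp_singleton (v : V) : weightExp w {v} = single v (w v) :=
  Finset.sum_singleton _ _

theorem weightExp_insert [DecidableEq V] {v : V} {U : Finset V} (hv : v ∉ U) :
    weightExp w (insert v U) = single v (w v) + weightExp w U :=
  Finset.sum_insert hv

theorem weightExp_mono {U U' : Finset V} (h : U ⊆ U') : weightExp w U ≤ weightExp w U' :=
  Finset.sum_le_sum_of_subset h

theorem weightExp_union_le [DecidableEq V] (U U' : Finset V) :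
    weightExp w (U ∪ U') ≤ weightExp w U + weightExp w U' := by
  rw [weightExp, weightExp, weightExp, ← Finset.sum_union_inter]
  exact le_self_add

theorem le_apply_of_weightExp_le_add [DecidableEq V] {U S : Finset V} {e : V →₀ ℕ}
    (h : weightExp w U ≤ e + weightExp w S) {v : V} (hvU : v ∈ U) (hvS : v ∉ S) : w v ≤ e v := by
  simpa [weightExp_apply, hvU, hvS] using h v

theorem weightExp_le_of_le_add [DecidableEq V] {U S : Finset V} {e : V →₀ ℕ}
    (h : weightExp w U ≤ e + weightExp w S) (hUS : Disjoint U S) : weightExp w U ≤ e := by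
  intro v
  by_cases hv : v ∈ U
  · simpa [weightExp_apply, hv] using
      le_apply_of_weightExp_le_add h hv (Finset.disjoint_left.1 hUS hv)
  · simp [weightExp_apply, hv]

theorem monomial_weightExp {R : Type*} [CommSemiring R] (U : Finset V) :
    monomial (weightExp w U) (1 : R) = ∏ v ∈ U, X v ^ w v := by
  simp [weightExp, monomial_sum_one, X_pow_eq_monomial]

end WeightExp

namespace WOGraph

variable {n : ℕ} (D : WOGraph n)

def edgeExps (U : Set (Fin n)) : Set (Fin n →₀ ℕ) :=
  {ε | ∃ a ∈ U, ∃ b ∈ U, D.underlying.Adj a b ∧ ε = weightExp D.w {a, b}}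

variable {D}

theorem w_eq_one_of_adj (hsink : ∀ x ∈ D.Vplus, D.IsSink x) {a b : Fin n} (h : D.adj a b) :
    D.w a = 1 := by
  by_contra hne
  exact hsink a (show 2 ≤ D.w a by have := D.one_le_w a; omega) b h

theorem X_mul_X_pow_eq_monomial_weightExp (K : Type*) [Field K]
    (hsink : ∀ x ∈ D.Vplus, D.IsSink x) {a b : Fin n} (h : D.adj a b) :
    (X a * X b ^ D.w b : MvPoly n K) = monomial (weightExp D.w {a, b}) 1 := by
  rw [monomial_weightExp, Finset.prod_pair (D.underlying.ne_of_adj (Or.inl h)),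
    w_eq_one_of_adj hsink h, pow_one]

theorem edgeIdealOn_eq_span_edgeExps (K : Type*) [Field K]
    (hsink : ∀ x ∈ D.Vplus, D.IsSink x) (U : Set (Fin n)) :
    edgeIdealOn K D U = Ideal.span ((fun s => monomial s (1 : K)) '' D.edgeExps U) := by
  unfold edgeIdealOn
  congr 1
  ext m
  simp only [edgeExps, Set.mem_image, Set.mem_ofPred_eq]
  constructor
  · rintro ⟨a, b, ha, hb, hab, rfl⟩
    exact ⟨_, ⟨a, ha, b, hb, Or.inl hab, rfl⟩,
      (X_mul_X_pow_eq_monomial_weightExp K hsink hab).symm⟩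
  · rintro ⟨_, ⟨a, ha, b, hb, hab | hba, rfl⟩, rfl⟩
    · exact ⟨a, b, ha, hb, hab, (X_mul_X_pow_eq_monomial_weightExp K hsink hab).symm⟩
    · refine ⟨b, a, hb, ha, hba, ?_⟩
      rw [Finset.pair_comm, X_mul_X_pow_eq_monomial_weightExp K hsink hba]

theorem span_X_pow_eq_span_monomial (K : Type*) [Field K] (U : Set (Fin n)) :
    Ideal.span {m : MvPoly n K | ∃ x ∈ U, m = X x ^ D.w x} =
      Ideal.span ((fun s => monomial s (1 : K)) '' ((fun x => single x (D.w x)) '' U)) := by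
  rw [Set.image_image]
  congr 1
  ext m
  simp [X_pow_eq_monomial, eq_comm]

theorem mem_nbhd_of_mem {S : Set (Fin n)} {x : Fin n} (hx : x ∈ S) : x ∈ D.nbhd S :=
  Or.inl hx

theorem mem_nbhd_of_adj {S : Set (Fin n)} {s x : Fin n} (hs : s ∈ S) (h : D.underlying.Adj s x) :
    x ∈ D.nbhd S :=
  Or.inr ⟨s, hs, h⟩

theorem exists_le_or_subset_of_weightExp_le_add {S : Finset (Fin n)} {a b : Fin n}
    {e : Fin n →₀ ℕ} (hab : D.underlying.Adj a b)
    (hle : weightExp D.w {a, b} ≤ e + weightExp D.w S) :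
    (∃ ε ∈ D.edgeExps (D.nbhd S)ᶜ ∪ (fun x => single x (D.w x)) '' D.nbhd S, ε ≤ e) ∨
      {a, b} ⊆ S := by
  have hpow (v : Fin n) (hv : v ∈ ({a, b} : Finset (Fin n))) (hvN : v ∈ D.nbhd S)
      (hvS : v ∉ S) : ∃ ε ∈ D.edgeExps (D.nbhd S)ᶜ ∪ (fun x => single x (D.w x)) '' D.nbhd S,
        ε ≤ e :=
    ⟨_, Or.inr ⟨v, hvN, rfl⟩, single_le_iff.2 (le_apply_of_weightExp_le_add hle hv hvS)⟩
  by_cases haN : a ∈ D.nbhd S <;> by_cases hbN : b ∈ D.nbhd S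
  · by_cases haS : a ∈ S
    · by_cases hbS : b ∈ S
      · exact Or.inr (Finset.insert_subset haS (Finset.singleton_subset_iff.2 hbS))
      · exact Or.inl (hpow b (by simp) hbN hbS)
    · exact Or.inl (hpow a (by simp) haN haS)
  · exact Or.inl (hpow a (by simp) haN fun haS => hbN (mem_nbhd_of_adj haS hab))
  · exact Or.inl (hpow b (by simp) hbN fun hbS => haN (mem_nbhd_of_adj hbS hab.symm))
  · refine Or.inl ⟨_, Or.inl ⟨a, haN, b, hbN, hab, rfl⟩, weightExp_le_of_le_add hle ?_⟩
    refine Finset.disjoint_left.2 fun v hv hvS => ?_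
    rcases Finset.mem_insert.1 hv with rfl | hv
    · exact haN (mem_nbhd_of_mem hvS)
    · exact hbN (mem_nbhd_of_mem (Finset.mem_singleton.1 hv ▸ hvS))

theorem exists_le_of_weightExp_add_le {S : Finset (Fin n)} (hS : S.card ≤ 3)
    {a₁ b₁ a₂ b₂ : Fin n} {e : Fin n →₀ ℕ}
    (h₁ : D.underlying.Adj a₁ b₁) (h₂ : D.underlying.Adj a₂ b₂)
    (hle : weightExp D.w {a₁, b₁} + weightExp D.w {a₂, b₂} ≤ e + weightExp D.w S) :
    ∃ ε ∈ D.edgeExps (D.nbhd S)ᶜ ∪ (fun x => single x (D.w x)) '' D.nbhd S, ε ≤ e := by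
  rcases exists_le_or_subset_of_weightExp_le_add h₁ (le_self_add.trans hle) with h | hsub₁
  · exact h
  rcases exists_le_or_subset_of_weightExp_le_add h₂ (le_add_self.trans hle) with h | hsub₂
  · exact h
  obtain ⟨v, hv⟩ : (({a₁, b₁} : Finset (Fin n)) ∩ {a₂, b₂}).Nonempty := by
    refine Finset.inter_nonempty_of_card_lt_card_add_card hsub₁ hsub₂ ?_
    rw [Finset.card_pair h₁.ne, Finset.card_pair h₂.ne]
    omega
  obtain ⟨hv₁, hv₂⟩ := Finset.mem_inter.1 hv
  have hvS : v ∈ S := hsub₁ hv₁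
  refine ⟨_, Or.inr ⟨v, mem_nbhd_of_mem hvS, rfl⟩, single_le_iff.2 ?_⟩
  have := hle v
  simp only [Finsupp.add_apply, weightExp_apply, if_pos hv₁, if_pos hv₂, if_pos hvS] at this
  omega

namespace IsTriangle

variable {i j r : Fin n}

theorem X_pow_mul_X_pow_mul_X_pow (htri : D.IsTriangle i j r) (K : Type*) [Field K] :
    (X i ^ D.w i * X j ^ D.w j * X r ^ D.w r : MvPoly n K) =
      monomial (weightExp D.w {i, j, r}) 1 := by
  rw [monomial_weightExp, Finset.prod_insert (by simp [htri.1.ne, htri.2.2.ne]),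
    Finset.prod_pair htri.2.1.ne, mul_assoc]

theorem exists_adj_of_mem_nbhd (htri : D.IsTriangle i j r) {x : Fin n}
    (hx : x ∈ D.nbhd {i, j, r}) :
    ∃ s t u, D.underlying.Adj s x ∧ D.underlying.Adj t u ∧ s ∉ ({t, u} : Finset (Fin n)) ∧
      insert s {t, u} = ({i, j, r} : Finset (Fin n)) := by
  obtain ⟨hij, hjr, hir⟩ := htri
  -- every vertex of a triangle is adjacent to another one, so `N[S]` is the open neighbourhood
  have hadj : ∃ s ∈ ({i, j, r} : Set (Fin n)), D.underlying.Adj s x := by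
    rcases hx with (rfl | rfl | rfl) | hx
    · exact ⟨j, by simp, hij.symm⟩
    · exact ⟨i, by simp, hij⟩
    · exact ⟨i, by simp, hir⟩
    · exact hx
  obtain ⟨s, hs, hsx⟩ := hadj
  rcases hs with rfl | rfl | rfl
  · exact ⟨s, j, r, hsx, hjr, by simp [hij.ne, hir.ne], rfl⟩
  · exact ⟨s, i, r, hsx, hir, by simp [hij.ne.symm, hjr.ne], Finset.insert_comm _ _ _⟩
  · refine ⟨s, i, j, hsx, hij, by simp [hir.ne.symm, hjr.ne.symm], ?_⟩
    rw [Finset.pair_comm i j, Finset.insert_comm, Finset.pair_comm, Finset.insert_comm]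

open scoped Pointwise in
theorem exists_mem_edgeExps_add_le_of_mem_nbhd (htri : D.IsTriangle i j r) {x : Fin n}
    (hx : x ∈ D.nbhd {i, j, r}) :
    ∃ ε ∈ D.edgeExps Set.univ + D.edgeExps Set.univ,
      ε ≤ single x (D.w x) + weightExp D.w {i, j, r} := by
  obtain ⟨s, t, u, hsx, htu, hs, hstu⟩ := htri.exists_adj_of_mem_nbhd hx
  refine ⟨weightExp D.w {s, x} + weightExp D.w {t, u},
    ⟨_, ⟨s, trivial, x, trivial, hsx, rfl⟩, _, ⟨t, trivial, u, trivial, htu, rfl⟩, rfl⟩, ?_⟩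
  calc weightExp D.w {s, x} + weightExp D.w {t, u}
      ≤ single s (D.w s) + single x (D.w x) + weightExp D.w {t, u} := by
        gcongr
        simpa [weightExp_singleton] using weightExp_union_le (w := D.w) {s} {x}
    _ = single x (D.w x) + weightExp D.w {i, j, r} := by
        rw [← hstu, weightExp_insert hs]
        abel

open scoped Pointwise in
theorem exists_edgeExps_add_le_iff (htri : D.IsTriangle i j r) (e : Fin n →₀ ℕ) :
    (∃ ε ∈ D.edgeExps Set.univ + D.edgeExps Set.univ, ε ≤ e + weightExp D.w {i, j, r}) ↔
      ∃ ε ∈ D.edgeExps (D.nbhd {i, j, r})ᶜ ∪ (fun x => single x (D.w x)) '' D.nbhd {i, j, r},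
        ε ≤ e := by
  constructor
  · rintro ⟨_, ⟨_, ⟨a₁, -, b₁, -, h₁, rfl⟩, _, ⟨a₂, -, b₂, -, h₂, rfl⟩, rfl⟩, hle⟩
    have hS : (({i, j, r} : Finset (Fin n)) : Set (Fin n)) = {i, j, r} := by simp
    exact hS ▸ exists_le_of_weightExp_add_le Finset.card_le_three h₁ h₂ hle
  · rintro ⟨_, ⟨a, -, b, -, hab, rfl⟩ | ⟨x, hx, rfl⟩, hle⟩
    · refine ⟨weightExp D.w {a, b} + weightExp D.w {i, j},
        ⟨_, ⟨a, trivial, b, trivial, hab, rfl⟩, _, ⟨i, trivial, j, trivial, htri.1, rfl⟩, rfl⟩, ?_⟩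
      exact add_le_add hle (weightExp_mono (by simp [Finset.subset_iff]))
    · obtain ⟨ε, hε, hεle⟩ := htri.exists_mem_edgeExps_add_le_of_mem_nbhd hx
      exact ⟨ε, hε, hεle.trans (by gcongr)⟩

end IsTriangle

end WOGraph

/-- If `V⁺` are sinks and `T` is the principal ideal generated by
`x_i^{w_i} x_j^{w_j} x_r^{w_r}` for a triangle `{x_i,x_j,x_r}` of `G`, then
`(I^2 : T) = I(D∖N[supp T]) + (x^{w(x)} : x ∈ N[supp T])`. -/
theorem stmt18 {n : ℕ} (K : Type*) [Field K] (D : WOGraph n)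
    (hsink : ∀ i ∈ D.Vplus, D.IsSink i)
    (i j r : Fin n) (htri : D.IsTriangle i j r) :
    Submodule.colon ((edgeIdeal K D) ^ 2)
        (Ideal.span {(X i ^ D.w i * X j ^ D.w j * X r ^ D.w r : MvPoly n K)}) =
      edgeIdealOn K D (D.nbhd {i, j, r})ᶜ ⊔
        Ideal.span {m : MvPoly n K | ∃ x ∈ D.nbhd {i, j, r}, m = X x ^ D.w x} := by
  ext f
  rw [htri.X_pow_mul_X_pow_mul_X_pow K, edgeIdeal, WOGraph.edgeIdealOn_eq_span_edgeExps K hsink,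
    sq, span_monomial_image_mul, mem_colon_span_monomial_iff,
    WOGraph.edgeIdealOn_eq_span_edgeExps K hsink, WOGraph.span_X_pow_eq_span_monomial,
    ← Ideal.span_union, ← Set.image_union, mem_ideal_span_monomial_image]
  exact forall₂_congr fun e _ => htri.exists_edgeExps_add_le_iff e
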